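/- arXiv:1211.3378 — 2 statements merged into one kernel-verified Lean document; each statement's English description precedes it below -/
import Mathlib

section
/- Let T be an R-tree with a minimal isometric action of a group G with dense orbits and containing a branch point. Then the set of branch points of T is dense in T, and consequently every arc of T is nowhere dense in T. -/
open Pointwise

/-- The segment `[x,y]` in a metric space (in an `ℝ`-tree this is the arc from `x` to `y`). -/
def seg {T : Type*} [MetricSpace T] (x y : T) : Set T :=
  {z : T | dist x z + dist z y = dist x y}

/-- An `ℝ`-tree: a geodesic metric space that is `0`-hyperbolic (four-point condition),
equivalently any two points are joined by a unique arc, isometric to a real interval. -/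
def IsRTree (T : Type*) [MetricSpace T] : Prop :=
  (∀ x y : T, ∃ f : ℝ → T, f 0 = x ∧ f (dist x y) = y ∧
      ∀ s ∈ Set.Icc (0 : ℝ) (dist x y), ∀ t ∈ Set.Icc (0 : ℝ) (dist x y),
        dist (f s) (f t) = |s - t|) ∧
  ∀ x y z w : T, dist x y + dist z w ≤ max (dist x z + dist y w) (dist x w + dist y z)

/-- A subtree: a convex subset. -/
def IsSubtree {T : Type*} [MetricSpace T] (Y : Set T) : Prop :=
  ∀ x ∈ Y, ∀ y ∈ Y, seg x y ⊆ Y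

/-- An arc: a subset isometric to a nondegenerate closed real interval. -/
def IsArc {T : Type*} [MetricSpace T] (A : Set T) : Prop :=
  ∃ (a b : ℝ) (f : ℝ → T), a < b ∧
    (∀ s ∈ Set.Icc a b, ∀ t ∈ Set.Icc a b, dist (f s) (f t) = |s - t|) ∧
    A = f '' Set.Icc a b

/-- A transverse family: a `G`-invariant collection of nondegenerate subtrees, any two
distinct members of which intersect in at most one point. -/
structure IsTransverseFamily (G : Type*) {T : Type*} [Group G] [MulAction G T]
    [MetricSpace T] (F : Set (Set T)) : Prop where
  invariant : ∀ (g : G), ∀ Y ∈ F, g • Y ∈ F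
  subtree : ∀ Y ∈ F, IsSubtree Y
  nondeg : ∀ Y ∈ F, ¬Y.Subsingleton
  transverse : ∀ Y ∈ F, ∀ Y' ∈ F, Y ≠ Y' → (Y ∩ Y').Subsingleton

/-- A minimal action: no proper nonempty invariant subtree. -/
def IsMinimalAction (G : Type*) (T : Type*) [Group G] [MulAction G T] [MetricSpace T] : Prop :=
  ∀ Y : Set T, Y.Nonempty → IsSubtree Y → (∀ g : G, g • Y = Y) → Y = Set.univ

/-- A branch point: a point whose removal leaves at least three connected components. -/
def IsBranchPoint {T : Type*} [MetricSpace T] (x : T) : Prop :=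
  ∃ y z w : T, y ≠ x ∧ z ≠ x ∧ w ≠ x ∧
    connectedComponentIn {x}ᶜ y ≠ connectedComponentIn {x}ᶜ z ∧
    connectedComponentIn {x}ᶜ y ≠ connectedComponentIn {x}ᶜ w ∧
    connectedComponentIn {x}ᶜ z ≠ connectedComponentIn {x}ᶜ w

/-!
Branch points are preserved by the action, which is by homeomorphisms, so the dense orbit of
one branch point consists of branch points. An arc is closed, and a branch point cannot lie in
its interior: all three directions at the branch point enter every neighbourhood of it, whereas
removing the point cuts the arc into only two connected pieces.
-/

open Set Metric

section Arc

variable {T : Type*} [MetricSpace T] {F : ℝ → T} {a b : ℝ}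

lemma continuousOn_of_dist_eq_abs_sub
    (hF : ∀ s ∈ Icc a b, ∀ t ∈ Icc a b, dist (F s) (F t) = |s - t|) :
    ContinuousOn F (Icc a b) := by
  refine (LipschitzOnWith.of_dist_le_mul fun s hs t ht => ?_).continuousOn (K := 1)
  rw [hF s hs t ht, NNReal.coe_one, one_mul, Real.dist_eq]

lemma injOn_of_dist_eq_abs_sub
    (hF : ∀ s ∈ Icc a b, ∀ t ∈ Icc a b, dist (F s) (F t) = |s - t|) :
    InjOn F (Icc a b) := fun s hs t ht hst => by
  simpa [hst, sub_eq_zero, eq_comm] using hF s hs t ht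

lemma connectedComponentIn_compl_apply_eq
    (hF : ∀ s ∈ Icc a b, ∀ t ∈ Icc a b, dist (F s) (F t) = |s - t|)
    {S : Set ℝ} (hS : IsPreconnected S) (hSab : S ⊆ Icc a b) {t₀ u v : ℝ}
    (ht₀ : t₀ ∈ Icc a b) (ht₀S : t₀ ∉ S) (hu : u ∈ S) (hv : v ∈ S) :
    connectedComponentIn {F t₀}ᶜ (F u) = connectedComponentIn {F t₀}ᶜ (F v) := by
  have hSC : F '' S ⊆ {F t₀}ᶜ := by
    rintro _ ⟨w, hw, rfl⟩ hwt₀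
    exact ht₀S (injOn_of_dist_eq_abs_sub hF (hSab hw) ht₀ hwt₀ ▸ hw)
  have hFS : IsPreconnected (F '' S) :=
    hS.image F ((continuousOn_of_dist_eq_abs_sub hF).mono hSab)
  exact connectedComponentIn_eq
    (hFS.subset_connectedComponentIn (mem_image_of_mem F hu) hSC (mem_image_of_mem F hv))

end Arc

/-- Removing `q` cuts the arc into two connected pieces. -/
lemma IsArc.exists_connectedComponentIn_compl_eq_or_eq {T : Type*} [MetricSpace T]
    {A : Set T} (hA : IsArc A) {q : T} (hq : q ∈ A) :
    ∃ C₁ C₂ : Set T, ∀ p ∈ A, p ≠ q →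
      connectedComponentIn {q}ᶜ p = C₁ ∨ connectedComponentIn {q}ᶜ p = C₂ := by
  obtain ⟨a, b, F, -, hF, rfl⟩ := hA
  obtain ⟨t₀, ht₀, rfl⟩ := hq
  refine ⟨connectedComponentIn {F t₀}ᶜ (F a), connectedComponentIn {F t₀}ᶜ (F b), ?_⟩
  rintro _ ⟨u, hu, rfl⟩ hut₀
  rcases lt_or_gt_of_ne (ne_of_apply_ne F hut₀) with hlt | hgt
  · exact .inl <| connectedComponentIn_compl_apply_eq hF isPreconnected_Ico
      (Ico_subset_Icc_self.trans (Icc_subset_Icc_right ht₀.2)) ht₀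
      (fun h => lt_irrefl _ h.2) ⟨hu.1, hlt⟩ ⟨le_rfl, hu.1.trans_lt hlt⟩
  · exact .inr <| connectedComponentIn_compl_apply_eq hF isPreconnected_Ioc
      (Ioc_subset_Icc_self.trans (Icc_subset_Icc_left ht₀.1)) ht₀
      (fun h => lt_irrefl _ h.1) ⟨hgt, hu.2⟩ ⟨hgt.trans_le hu.2, le_rfl⟩

lemma IsArc.isClosed {T : Type*} [MetricSpace T] {A : Set T} (hA : IsArc A) : IsClosed A := by
  obtain ⟨a, b, F, -, hF, rfl⟩ := hA
  exact (isCompact_Icc.image_of_continuousOn (continuousOn_of_dist_eq_abs_sub hF)).isClosed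

/-- Walk from `q` along the geodesic to `y`. -/
lemma IsRTree.exists_mem_ball_connectedComponentIn_eq {T : Type*} [MetricSpace T]
    (hT : IsRTree T) {q y : T} (hy : y ≠ q) {δ : ℝ} (hδ : 0 < δ) :
    ∃ p ∈ ball q δ, p ≠ q ∧ connectedComponentIn {q}ᶜ p = connectedComponentIn {q}ᶜ y := by
  obtain ⟨f, hf0, hfd, hf⟩ := hT.1 q y
  set d := dist q y
  have hd : 0 < d := dist_pos.2 hy.symm
  set s := min δ d / 2 with hs_def
  have hs : 0 < s := by positivity
  have hsδ : s < δ := by linarith [min_le_left δ d]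
  have hsd : s < d := by linarith [min_le_right δ d]
  have h0 : (0 : ℝ) ∈ Icc 0 d := left_mem_Icc.2 hd.le
  have hsmem : s ∈ Icc 0 d := ⟨hs.le, hsd.le⟩
  refine ⟨f s, ?_, fun hfs => hs.ne' ?_, ?_⟩
  · rw [mem_ball, ← hf0, hf s hsmem 0 h0, sub_zero, abs_of_pos hs]
    exact hsδ
  · exact injOn_of_dist_eq_abs_sub hf hsmem h0 (hfs.trans hf0.symm)
  · rw [← hf0, ← hfd]
    exact connectedComponentIn_compl_apply_eq hf isPreconnected_Ioc Ioc_subset_Icc_self h0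
      (fun h => lt_irrefl _ h.1) ⟨hs, hsd.le⟩ ⟨hd, le_rfl⟩

lemma IsBranchPoint.image_homeomorph {T T' : Type*} [MetricSpace T] [MetricSpace T']
    (e : T ≃ₜ T') {x : T} (hx : IsBranchPoint x) : IsBranchPoint (e x) := by
  obtain ⟨y, z, w, hy, hz, hw, hyz, hyw, hzw⟩ := hx
  have himage : ∀ p : T, p ≠ x →
      e '' connectedComponentIn {x}ᶜ p = connectedComponentIn {e x}ᶜ (e p) := fun p hp => by
    rw [e.image_connectedComponentIn hp, image_compl_eq e.bijective, image_singleton]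
  have hne : ∀ {p p' : T}, p ≠ x → p' ≠ x →
      connectedComponentIn {x}ᶜ p ≠ connectedComponentIn {x}ᶜ p' →
      connectedComponentIn {e x}ᶜ (e p) ≠ connectedComponentIn {e x}ᶜ (e p') :=
    fun hp hp' h => by rwa [← himage _ hp, ← himage _ hp', (image_injective.2 e.injective).ne_iff]
  exact ⟨e y, e z, e w, e.injective.ne hy, e.injective.ne hz, e.injective.ne hw,
    hne hy hz hyz, hne hy hw hyw, hne hz hw hzw⟩

lemma IsBranchPoint.smul {G T : Type*} [Group G] [MetricSpace T] [MulAction G T]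
    [ContinuousConstSMul G T] (g : G) {x : T} (hx : IsBranchPoint x) : IsBranchPoint (g • x) :=
  hx.image_homeomorph (Homeomorph.smul g)

lemma dense_setOf_isBranchPoint_of_dense_orbit {G T : Type*} [Group G] [MetricSpace T]
    [MulAction G T] [ContinuousConstSMul G T] {x : T} (hx : IsBranchPoint x)
    (hdense : Dense (MulAction.orbit G x)) : Dense {y : T | IsBranchPoint y} :=
  hdense.mono <| by rintro _ ⟨g, rfl⟩; exact hx.smul g

/-- A branch point has three directions, each reaching into any neighbourhood, while an arc
through it meets only two. -/
lemma IsBranchPoint.notMem_interior_of_isArc {T : Type*} [MetricSpace T] (hT : IsRTree T)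
    {q : T} (hq : IsBranchPoint q) {A : Set T} (hA : IsArc A) : q ∉ interior A := by
  intro hqA
  obtain ⟨δ, hδ, hball⟩ := Metric.mem_nhds_iff.1 (mem_interior_iff_mem_nhds.1 hqA)
  obtain ⟨C₁, C₂, hC⟩ := hA.exists_connectedComponentIn_compl_eq_or_eq (hball (mem_ball_self hδ))
  have hdir : ∀ y : T, y ≠ q →
      connectedComponentIn {q}ᶜ y = C₁ ∨ connectedComponentIn {q}ᶜ y = C₂ := fun y hy => by
    obtain ⟨p, hpball, hpq, hpy⟩ := hT.exists_mem_ball_connectedComponentIn_eq hy hδ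
    rw [← hpy]
    exact hC p (hball hpball) hpq
  obtain ⟨y, z, w, hy, hz, hw, hyz, hyw, hzw⟩ := hq
  rcases hdir y hy with hy' | hy' <;> rcases hdir z hz with hz' | hz' <;>
    rcases hdir w hw with hw' | hw' <;> simp_all

lemma IsArc.isNowhereDense {T : Type*} [MetricSpace T] (hT : IsRTree T) {A : Set T}
    (hA : IsArc A) (hB : Dense {x : T | IsBranchPoint x}) : IsNowhereDense A := by
  rw [hA.isClosed.isNowhereDense_iff, ← not_nonempty_iff_eq_empty]
  intro hne
  obtain ⟨q, hq, hqA⟩ := hB.exists_mem_open isOpen_interior hne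
  exact hq.notMem_interior_of_isArc hT hA hqA

theorem dense_branchPoints_and_arcs_nowhereDense_general
    {T : Type*} [MetricSpace T] {N : ℕ} [MulAction (FreeGroup (Fin N)) T]
    (hT : IsRTree T) (hiso : ∀ g : FreeGroup (Fin N), Isometry fun x : T => g • x)
    (hdense : ∀ x : T, Dense (MulAction.orbit (FreeGroup (Fin N)) x : Set T))
    (hbranch : ∃ x : T, IsBranchPoint x) :
    Dense {x : T | IsBranchPoint x} ∧ ∀ A : Set T, IsArc A → IsNowhereDense A := by
  have : ContinuousConstSMul (FreeGroup (Fin N)) T := ⟨fun g => (hiso g).continuous⟩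
  obtain ⟨x, hx⟩ := hbranch
  have hB := dense_setOf_isBranchPoint_of_dense_orbit hx (hdense x)
  exact ⟨hB, fun A hA => hA.isNowhereDense hT hB⟩

/-- In a minimal `F_N`-tree with dense orbits containing a branch point, branch points are
dense and every arc is nowhere dense. -/
theorem dense_branchPoints_and_arcs_nowhereDense
    {T : Type*} [MetricSpace T] {N : ℕ} [MulAction (FreeGroup (Fin N)) T]
    (hT : IsRTree T) (hiso : ∀ g : FreeGroup (Fin N), Isometry fun x : T => g • x)
    (hmin : IsMinimalAction (FreeGroup (Fin N)) T)
    (hdense : ∀ x : T, Dense (MulAction.orbit (FreeGroup (Fin N)) x : Set T))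
    (hbranch : ∃ x : T, IsBranchPoint x) :
    Dense {x : T | IsBranchPoint x} ∧ ∀ A : Set T, IsArc A → IsNowhereDense A :=
  dense_branchPoints_and_arcs_nowhereDense_general hT hiso hdense hbranch
end

section
/- Let T be an R-tree with a minimal isometric action of F_N. The action is indecomposable if and only if T admits no transverse family. -/
open Pointwise

/-- Mixing: every arc `J` is covered by finitely many translates of any given arc `I`. -/
def IsMixing (G : Type*) (T : Type*) [Group G] [MulAction G T] [MetricSpace T] : Prop :=
  ∀ I J : Set T, IsArc I → IsArc J → ∃ (r : ℕ) (g : Fin r → G), J ⊆ ⋃ i, g i • I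

/-- Indecomposable: mixing, with the covering translates forming a chain in which
consecutive translates overlap in a nondegenerate set. -/
def IsIndecomposable (G : Type*) (T : Type*) [Group G] [MulAction G T] [MetricSpace T] : Prop :=
  ∀ I J : Set T, IsArc I → IsArc J →
    ∃ (r : ℕ) (g : Fin (r + 1) → G), J ⊆ ⋃ i, g i • I ∧
      ∀ i : Fin r, ¬(g i.castSucc • I ∩ g i.succ • I).Subsingleton

/-- A transverse covering: a transverse family of closed subtrees such that every arc of `T`
is covered by finitely many members. -/
structure IsTransverseCovering (G : Type*) {T : Type*} [Group G] [MulAction G T]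
    [MetricSpace T] (F : Set (Set T)) extends IsTransverseFamily G F : Prop where
  closed : ∀ Y ∈ F, IsClosed Y
  covers : ∀ A : Set T, IsArc A →
    ∃ (r : ℕ) (Ys : Fin r → Set T), (∀ i, Ys i ∈ F) ∧ A ⊆ ⋃ i, Ys i

/-!
If `T` is indecomposable and `Y` belongs to a transverse family, take an arc `I ⊆ Y` and any arc
`J`. In an indecomposability chain of translates of `I` covering `J`, consecutive translates
overlap nondegenerately, so by transversality the corresponding translates of `Y` coincide and
`J` lies in a single translate `g • Y`. For `J` running from a point of `Y` towards an arbitrary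
point `p` through a second point of `Y`, the translate `g • Y` meets `Y` nondegenerately, hence
equals `Y`, and `p ∈ Y`.

Conversely, let arcs `I`, `J` witness the failure of indecomposability. Nondegenerate overlap
generates an equivalence relation on the translates of `I`, and the union of each class is a
subtree. Two such unions sharing an arc coincide: finitely many translates from each class cover
the arc, so by a measure count two of them overlap in a set of positive length. These unions
form a transverse family, and none is all of `T`, since a class whose union contains the
endpoints of `J` yields a chain of overlapping translates covering `J`.
-/

open Set

theorem Relation.ReflTransGen.exists_fin_chain {α : Type*} {r : α → α → Prop} {a b : α}
    (h : Relation.ReflTransGen r a b) :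
    ∃ (n : ℕ) (c : Fin (n + 1) → α), c 0 = a ∧ c (Fin.last n) = b ∧
      ∀ i : Fin n, r (c i.castSucc) (c i.succ) := by
  induction h with
  | refl => exact ⟨0, fun _ => a, rfl, rfl, Fin.elim0⟩
  | @tail b d _ hbd ih =>
    obtain ⟨n, c, hc0, hcn, hc⟩ := ih
    refine ⟨n + 1, Fin.snoc c d, ?_, Fin.snoc_last _ _, fun i => ?_⟩
    · rw [← Fin.castSucc_zero, Fin.snoc_castSucc, hc0]
    · induction i using Fin.lastCases with
      | last => rwa [Fin.succ_last, Fin.snoc_last, Fin.snoc_castSucc, hcn]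
      | cast j =>
        rw [Fin.succ_castSucc, Fin.snoc_castSucc, Fin.snoc_castSucc]
        exact hc j

theorem Relation.reflTransGen_of_fin_chain {α : Type*} {r : α → α → Prop} {n : ℕ}
    {c : Fin (n + 1) → α} (hc : ∀ i : Fin n, r (c i.castSucc) (c i.succ)) (i : Fin (n + 1)) :
    Relation.ReflTransGen r (c 0) (c i) := by
  induction i using Fin.induction with
  | zero => exact .refl
  | succ i ih => exact ih.tail (hc i)

theorem MeasureTheory.exists_not_subsingleton_inter_of_subset_iUnion {α ι κ : Type*}
    [MeasurableSpace α] {μ : Measure α} [NullSingletonClass μ] [Countable ι] [Countable κ]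
    {S : Set α} (hS : μ S ≠ 0) {A : ι → Set α} {B : κ → Set α}
    (hA : S ⊆ ⋃ i, A i) (hB : S ⊆ ⋃ j, B j) : ∃ i j, ¬(A i ∩ B j).Subsingleton := by
  by_contra! h
  refine hS (measure_mono_null (fun x hx => ?_)
    (measure_iUnion_null fun i => measure_iUnion_null fun j => (h i j).measure_zero μ))
  obtain ⟨i, hi⟩ := mem_iUnion.1 (hA hx)
  obtain ⟨j, hj⟩ := mem_iUnion.1 (hB hx)
  exact mem_iUnion₂.2 ⟨i, j, hi, hj⟩

section RTree

variable {T : Type*} [MetricSpace T] {x y z w m : T}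

lemma mem_seg : z ∈ seg x y ↔ dist x z + dist z y = dist x y := Iff.rfl

lemma left_mem_seg (x y : T) : x ∈ seg x y := by simp [mem_seg]

lemma right_mem_seg (x y : T) : y ∈ seg x y := by simp [mem_seg]

lemma seg_comm (x y : T) : seg x y = seg y x := by
  ext z
  rw [mem_seg, mem_seg, add_comm, dist_comm z y, dist_comm x z, dist_comm x y]

lemma not_subsingleton_seg (hxy : x ≠ y) : ¬(seg x y).Subsingleton :=
  fun h => hxy (h (left_mem_seg x y) (right_mem_seg x y))

lemma seg_subset_seg_of_mem (hm : m ∈ seg x y) : seg x m ⊆ seg x y := by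
  intro z hz
  simp only [mem_seg] at hm hz ⊢
  linarith [dist_triangle x z y, dist_triangle z m y]

lemma mem_seg_of_dist_le (hT : IsRTree T) (hz : z ∈ seg x y) (hm : m ∈ seg x y)
    (h : dist x z ≤ dist x m) : z ∈ seg x m := by
  have h4 := hT.2 z m x y
  simp only [mem_seg, dist_comm z x, dist_comm m x] at hz hm h4 ⊢
  rcases le_max_iff.1 h4 with h' | h' <;> linarith [dist_triangle x z m]

lemma eq_of_mem_seg_of_dist_eq (hT : IsRTree T) (hz : z ∈ seg x y) (hw : w ∈ seg x y)
    (h : dist x z = dist x w) : z = w := by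
  have hzw : dist x z + dist z w = dist x w := mem_seg_of_dist_le hT hz hw h.le
  exact dist_eq_zero.1 (by linarith)

lemma image_Icc_eq_seg (hT : IsRTree T) {f : ℝ → T} {a b : ℝ} (hab : a ≤ b)
    (hf : ∀ s ∈ Icc a b, ∀ t ∈ Icc a b, dist (f s) (f t) = |s - t|) :
    f '' Icc a b = seg (f a) (f b) := by
  have ha : a ∈ Icc a b := left_mem_Icc.2 hab
  have hb : b ∈ Icc a b := right_mem_Icc.2 hab
  have hdist : ∀ t ∈ Icc a b, dist (f a) (f t) = t - a := fun t ht => by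
    rw [hf a ha t ht, abs_sub_comm, abs_of_nonneg (by linarith [ht.1])]
  have hmem : ∀ t ∈ Icc a b, f t ∈ seg (f a) (f b) := fun t ht => by
    simp only [mem_seg, hdist t ht, hdist b hb, hf t ht b hb,
      abs_of_nonpos (by linarith [ht.2] : t - b ≤ 0)]
    ring
  refine Subset.antisymm (image_subset_iff.2 hmem) fun z hz => ?_
  have hz' : dist (f a) z + dist z (f b) = b - a := (hdist b hb) ▸ hz
  have ht : a + dist (f a) z ∈ Icc a b :=
    ⟨by linarith [dist_nonneg (x := f a) (y := z)], by linarith [dist_nonneg (x := z) (y := f b)]⟩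
  refine ⟨_, ht, eq_of_mem_seg_of_dist_eq hT (hmem _ ht) hz ?_⟩
  rw [hdist _ ht, add_sub_cancel_left]

lemma exists_median (hT : IsRTree T) (x y p : T) :
    ∃ m, m ∈ seg x y ∧ m ∈ seg x p ∧ m ∈ seg y p := by
  obtain ⟨f, hf0, hfp, hf⟩ := hT.1 x p
  -- the point of `[x,p]` at distance the Gromov product `(y|p)_x` from `x`
  set a := (dist x y + dist x p - dist y p) / 2 with ha_def
  have ha : a ∈ Icc 0 (dist x p) :=
    ⟨by linarith [dist_triangle y x p, dist_comm x y], by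
      linarith [dist_triangle x p y, dist_comm p y]⟩
  have hmp : f a ∈ seg x p := by
    rw [← hf0, ← hfp, ← image_Icc_eq_seg hT dist_nonneg hf]
    exact mem_image_of_mem f ha
  have hxm : dist x (f a) = a := by
    rw [← hf0, hf 0 (left_mem_Icc.2 dist_nonneg) a ha, zero_sub, abs_neg, abs_of_nonneg ha.1]
  have hmp' : dist (f a) p = dist x p - a := by
    simp only [mem_seg, hxm] at hmp; linarith
  have h4 := hT.2 y (f a) x p
  have hym : dist y (f a) = (dist x y + dist y p - dist x p) / 2 := by
    rcases le_max_iff.1 h4 with h' | h' <;>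
      linarith [dist_triangle x (f a) y, dist_comm y x, dist_comm (f a) x, dist_comm (f a) y]
  refine ⟨f a, ?_, hmp, ?_⟩
  · simp only [mem_seg, hxm, dist_comm (f a) y, hym]; ring
  · simp only [mem_seg, hym, hmp']; ring

lemma seg_subset_union (hT : IsRTree T) (x v y : T) : seg x y ⊆ seg x v ∪ seg v y := by
  intro z hz
  obtain ⟨m, hmxy, hmxv, hmyv⟩ := exists_median hT x y v
  rcases le_total (dist x z) (dist x m) with h | h
  · exact Or.inl (seg_subset_seg_of_mem hmxv (mem_seg_of_dist_le hT hz hmxy h))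
  · right
    rw [seg_comm] at hz hmxy ⊢
    refine seg_subset_seg_of_mem hmyv (mem_seg_of_dist_le hT hz hmxy ?_)
    simp only [mem_seg] at hz hmxy
    linarith [dist_comm z x, dist_comm m x]

lemma isSubtree_seg (hT : IsRTree T) (x y : T) : IsSubtree (seg x y) := by
  intro z hz w hw q hq
  rcases seg_subset_union hT z x w hq with hq | hq
  · rw [seg_comm] at hq
    exact seg_subset_seg_of_mem hz hq
  · exact seg_subset_seg_of_mem hw hq

lemma isArc_seg (hT : IsRTree T) (hxy : x ≠ y) : IsArc (seg x y) := by
  obtain ⟨f, hf0, hfy, hf⟩ := hT.1 x y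
  refine ⟨0, dist x y, f, dist_pos.2 hxy, hf, ?_⟩
  rw [image_Icc_eq_seg hT dist_nonneg hf, hf0, hfy]

lemma IsArc.exists_eq_seg (hT : IsRTree T) {A : Set T} (hA : IsArc A) :
    ∃ x y : T, x ≠ y ∧ A = seg x y := by
  obtain ⟨a, b, f, hab, hf, rfl⟩ := hA
  refine ⟨f a, f b, fun h => ?_, image_Icc_eq_seg hT hab.le hf⟩
  have := hf a (left_mem_Icc.2 hab.le) b (right_mem_Icc.2 hab.le)
  rw [h, dist_self, eq_comm, abs_eq_zero, sub_eq_zero] at this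
  exact hab.ne this

lemma seg_subset_iUnion_of_chain (hT : IsRTree T) {n : ℕ} {Y : Fin (n + 1) → Set T}
    (hY : ∀ i, IsSubtree (Y i)) (hov : ∀ i : Fin n, (Y i.castSucc ∩ Y i.succ).Nonempty)
    (hx : x ∈ Y 0) (hy : y ∈ Y (Fin.last n)) : seg x y ⊆ ⋃ i, Y i := by
  induction n generalizing y with
  | zero => exact (hY 0 x hx y hy).trans (subset_iUnion Y 0)
  | succ n ih =>
    obtain ⟨z, hz, hz'⟩ := hov (Fin.last n)
    have hxz : seg x z ⊆ ⋃ i, Y (Fin.castSucc i) :=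
      ih (fun i => hY _) (fun i => by simpa only [Fin.succ_castSucc] using hov i.castSucc) hx hz
    refine (seg_subset_union hT x z y).trans (union_subset (hxz.trans ?_) ?_)
    · exact iUnion_subset fun i => subset_iUnion Y _
    · rw [Fin.succ_last] at hz'
      exact (hY _ z hz' y hy).trans (subset_iUnion Y _)

lemma exists_not_subsingleton_inter_of_seg_subset_iUnion (hT : IsRTree T) {ι κ : Type*}
    [Countable ι] [Countable κ] {A : ι → Set T} {B : κ → Set T} (hxy : x ≠ y)
    (hA : seg x y ⊆ ⋃ i, A i) (hB : seg x y ⊆ ⋃ j, B j) :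
    ∃ i j, ¬(A i ∩ B j).Subsingleton := by
  obtain ⟨f, hf0, hfy, hf⟩ := hT.1 x y
  have hseg : f '' Icc 0 (dist x y) = seg x y := by
    rw [image_Icc_eq_seg hT dist_nonneg hf, hf0, hfy]
  have hvol : MeasureTheory.volume (Icc 0 (dist x y)) ≠ 0 := by
    simpa [Real.volume_Icc] using dist_pos.2 hxy
  have hf_mem : ∀ t ∈ Icc 0 (dist x y), f t ∈ seg x y := fun t ht =>
    hseg ▸ mem_image_of_mem f ht
  obtain ⟨i, j, hij⟩ := MeasureTheory.exists_not_subsingleton_inter_of_subset_iUnion hvol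
    (A := fun i => Icc 0 (dist x y) ∩ f ⁻¹' A i) (B := fun j => Icc 0 (dist x y) ∩ f ⁻¹' B j)
    (fun t ht => by
      obtain ⟨i, hi⟩ := mem_iUnion.1 (hA (hf_mem t ht))
      exact mem_iUnion.2 ⟨i, ht, hi⟩)
    (fun t ht => by
      obtain ⟨j, hj⟩ := mem_iUnion.1 (hB (hf_mem t ht))
      exact mem_iUnion.2 ⟨j, ht, hj⟩)
  refine ⟨i, j, fun hsub => hij fun s hs t ht => ?_⟩
  have hst := hf s hs.1.1 t ht.1.1
  rw [hsub ⟨hs.1.2, hs.2.2⟩ ⟨ht.1.2, ht.2.2⟩, dist_self, eq_comm, abs_eq_zero, sub_eq_zero] at hst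
  exact hst

end RTree

section Translates

variable {G T : Type*} [Group G] [MulAction G T] {I : Set T} {g h k : G}

lemma smul_set_subsingleton_iff (g : G) (A : Set T) : (g • A).Subsingleton ↔ A.Subsingleton :=
  (MulAction.injective g).subsingleton_image_iff

def Overlapping (I : Set T) (g h : G) : Prop := ¬(g • I ∩ h • I).Subsingleton

lemma Overlapping.symm (hgh : Overlapping I g h) : Overlapping I h g := by
  rwa [Overlapping, inter_comm]

lemma Overlapping.mul_left (k : G) (hgh : Overlapping I g h) : Overlapping I (k * g) (k * h) := by
  rwa [Overlapping, mul_smul, mul_smul, ← smul_set_inter, smul_set_subsingleton_iff]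

def Linked (I : Set T) : G → G → Prop := Relation.ReflTransGen (Overlapping I)

lemma Linked.symm (hgh : Linked I g h) : Linked I h g := by
  induction hgh with
  | refl => exact .refl
  | tail _ hov ih => exact .head hov.symm ih

lemma Linked.trans (hgh : Linked I g h) (hhk : Linked I h k) : Linked I g k :=
  Relation.ReflTransGen.trans hgh hhk

lemma Linked.mul_left (k : G) (hgh : Linked I g h) : Linked I (k * g) (k * h) := by
  induction hgh with
  | refl => exact .refl
  | tail _ hov ih => exact ih.tail (hov.mul_left k)

/-- `linkedHull I 1` is the subtree `Y_I` of the paper. -/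
def linkedHull (I : Set T) (g : G) : Set T := ⋃ (k : G) (_ : Linked I g k), k • I

lemma smul_subset_linkedHull (g : G) : g • I ⊆ linkedHull I g :=
  subset_iUnion₂ (s := fun k (_ : Linked I g k) => k • I) g .refl

lemma linkedHull_eq_of_linked (hgh : Linked I g h) : linkedHull I g = linkedHull I h := by
  ext x
  simp only [linkedHull, mem_iUnion, exists_prop]
  exact ⟨fun ⟨k, hk, hx⟩ => ⟨k, hgh.symm.trans hk, hx⟩, fun ⟨k, hk, hx⟩ => ⟨k, hgh.trans hk, hx⟩⟩

lemma smul_linkedHull (g h : G) : g • linkedHull I h = linkedHull I (g * h) := by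
  simp only [linkedHull, smul_set_iUnion, smul_smul]
  refine Subset.antisymm (iUnion₂_subset fun k hk => ?_) (iUnion₂_subset fun k hk => ?_)
  · exact subset_iUnion₂ (s := fun k (_ : Linked I (g * h) k) => k • I) _ (hk.mul_left g)
  · have hk' : Linked I h (g⁻¹ * k) := by simpa using hk.mul_left g⁻¹
    rw [← mul_inv_cancel_left g k]
    exact subset_iUnion₂ (s := fun k (_ : Linked I h k) => (g * k) • I) _ hk'

end Translates

section LinkedHull

variable {G T : Type*} [Group G] [MulAction G T] [MetricSpace T] {I Y : Set T} {g h : G}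

lemma IsSubtree.smul (hiso : ∀ g : G, Isometry fun x : T => g • x) (hY : IsSubtree Y)
    (g : G) : IsSubtree (g • Y) := by
  rintro _ ⟨x, hx, rfl⟩ _ ⟨y, hy, rfl⟩ z hz
  refine mem_smul_set_iff_inv_smul_mem.2 (hY x hx y hy ?_)
  have hdist : ∀ a b : T, dist (g⁻¹ • a) (g⁻¹ • b) = dist a b := (hiso g⁻¹).dist_eq
  rw [mem_seg] at hz ⊢
  rwa [← inv_smul_smul g x, ← inv_smul_smul g y, hdist, hdist, hdist]

lemma exists_chain_of_mem_linkedHull (hT : IsRTree T)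
    (hiso : ∀ g : G, Isometry fun x : T => g • x) (hI : IsSubtree I) {x y : T}
    (hx : x ∈ linkedHull I g) (hy : y ∈ linkedHull I g) :
    ∃ (n : ℕ) (c : Fin (n + 1) → G), (∀ i, Linked I g (c i)) ∧
      (∀ i : Fin n, Overlapping I (c i.castSucc) (c i.succ)) ∧ seg x y ⊆ ⋃ i, c i • I := by
  simp only [linkedHull, mem_iUnion, exists_prop] at hx hy
  obtain ⟨k, hgk, hx⟩ := hx
  obtain ⟨l, hgl, hy⟩ := hy
  obtain ⟨n, c, hc0, hcn, hc⟩ := (hgk.symm.trans hgl).exists_fin_chain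
  refine ⟨n, c, fun i => hgk.trans (hc0 ▸ Relation.reflTransGen_of_fin_chain hc i), hc, ?_⟩
  exact seg_subset_iUnion_of_chain hT (fun i => hI.smul hiso _)
    (fun i => (not_subsingleton_iff.1 (hc i)).nonempty) (hc0 ▸ hx) (hcn ▸ hy)

lemma isSubtree_linkedHull (hT : IsRTree T)
    (hiso : ∀ g : G, Isometry fun x : T => g • x) (hI : IsSubtree I) (g : G) :
    IsSubtree (linkedHull I g) := by
  intro x hx y hy
  obtain ⟨n, c, hgc, -, hxy⟩ := exists_chain_of_mem_linkedHull hT hiso hI hx hy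
  exact hxy.trans (iUnion_subset fun i =>
    subset_iUnion₂ (s := fun k (_ : Linked I g k) => k • I) _ (hgc i))

lemma linkedHull_eq_of_not_subsingleton_inter (hT : IsRTree T)
    (hiso : ∀ g : G, Isometry fun x : T => g • x) (hI : IsSubtree I)
    (hgh : ¬(linkedHull I g ∩ linkedHull I h).Subsingleton) :
    linkedHull I g = linkedHull I h := by
  obtain ⟨u, ⟨hug, huh⟩, v, ⟨hvg, hvh⟩, huv⟩ := not_subsingleton_iff.1 hgh
  obtain ⟨_, c, hgc, -, hc⟩ := exists_chain_of_mem_linkedHull hT hiso hI hug hvg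
  obtain ⟨_, d, hhd, -, hd⟩ := exists_chain_of_mem_linkedHull hT hiso hI huh hvh
  obtain ⟨i, j, hij⟩ := exists_not_subsingleton_inter_of_seg_subset_iUnion hT huv hc hd
  exact linkedHull_eq_of_linked ((hgc i).trans (Relation.ReflTransGen.single hij) |>.trans
    (hhd j).symm)

theorem exists_transverseFamily_of_not_isIndecomposable (hT : IsRTree T)
    (hiso : ∀ g : G, Isometry fun x : T => g • x) (hInd : ¬IsIndecomposable G T) :
    ∃ F : Set (Set T), F.Nonempty ∧ IsTransverseFamily G F ∧ ∀ Y ∈ F, Y ≠ univ := by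
  simp only [IsIndecomposable, not_forall, not_exists, not_and, exists_prop, not_not] at hInd
  obtain ⟨I, J, hIarc, hJarc, hIJ⟩ := hInd
  obtain ⟨a, b, hab, rfl⟩ := hIarc.exists_eq_seg hT
  obtain ⟨x, y, -, rfl⟩ := hJarc.exists_eq_seg hT
  have hI := isSubtree_seg hT a b
  refine ⟨range (linkedHull (G := G) (seg a b)), ⟨_, 1, rfl⟩, ⟨?_, ?_, ?_, ?_⟩, ?_⟩
  · rintro g _ ⟨h, rfl⟩
    exact ⟨g * h, (smul_linkedHull g h).symm⟩
  · rintro _ ⟨g, rfl⟩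
    exact isSubtree_linkedHull hT hiso hI g
  · rintro _ ⟨g, rfl⟩ hsub
    exact not_subsingleton_seg hab
      ((smul_set_subsingleton_iff g _).1 (hsub.anti (smul_subset_linkedHull g)))
  · rintro _ ⟨g, rfl⟩ _ ⟨h, rfl⟩ hne
    by_contra hgh
    exact hne (linkedHull_eq_of_not_subsingleton_inter hT hiso hI hgh)
  · rintro _ ⟨g, rfl⟩ huniv
    obtain ⟨n, c, -, hc, hcov⟩ := exists_chain_of_mem_linkedHull hT hiso hI
      (huniv ▸ mem_univ x) (huniv ▸ mem_univ y)
    obtain ⟨i, hi⟩ := hIJ n c hcov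
    exact hc i hi

end LinkedHull

section Forward

variable {G T : Type*} [Group G] [MulAction G T] [MetricSpace T] {F : Set (Set T)} {Y : Set T}

lemma IsTransverseFamily.exists_smul_superset_of_isIndecomposable
    (hInd : IsIndecomposable G T) (hF : IsTransverseFamily G F) (hY : Y ∈ F) {I J : Set T}
    (hI : IsArc I) (hIY : I ⊆ Y) (hJ : IsArc J) : ∃ g : G, J ⊆ g • Y := by
  obtain ⟨r, g, hcov, hchain⟩ := hInd I J hI hJ
  have hstep (i : Fin r) : g i.castSucc • Y = g i.succ • Y := by
    by_contra hne
    refine hchain i ((hF.transverse _ (hF.invariant _ _ hY) _ (hF.invariant _ _ hY) hne).anti ?_)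
    exact inter_subset_inter (smul_set_mono hIY) (smul_set_mono hIY)
  have hconst (i : Fin (r + 1)) : g i • Y = g 0 • Y := by
    induction i using Fin.induction with
    | zero => rfl
    | succ i ih => rw [← hstep i, ih]
  refine ⟨g 0, hcov.trans (iUnion_subset fun i => ?_)⟩
  exact (hconst i) ▸ smul_set_mono hIY

lemma IsTransverseFamily.mem_of_isIndecomposable (hT : IsRTree T)
    (hInd : IsIndecomposable G T) (hF : IsTransverseFamily G F) (hY : Y ∈ F) {x y p m : T}
    (hx : x ∈ Y) (hy : y ∈ Y) (hxy : x ≠ y) (hm : m ∈ Y) (hmxp : m ∈ seg x p) (hmx : m ≠ x) :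
    p ∈ Y := by
  rcases eq_or_ne x p with rfl | hxp
  · exact hx
  obtain ⟨g, hg⟩ := hF.exists_smul_superset_of_isIndecomposable hInd hY (isArc_seg hT hxy)
    (hF.subtree Y hY x hx y hy) (isArc_seg hT hxp)
  have hYg : Y = g • Y := by
    by_contra hne
    exact hmx (hF.transverse Y hY _ (hF.invariant g Y hY) hne ⟨hm, hg hmxp⟩
      ⟨hx, hg (left_mem_seg x p)⟩)
  exact hYg ▸ hg (right_mem_seg x p)

theorem IsTransverseFamily.eq_univ_of_isIndecomposable (hT : IsRTree T)
    (hInd : IsIndecomposable G T) (hF : IsTransverseFamily G F) (hY : Y ∈ F) : Y = univ := by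
  obtain ⟨x, hx, y, hy, hxy⟩ := not_subsingleton_iff.1 (hF.nondeg Y hY)
  refine eq_univ_of_forall fun p => ?_
  obtain ⟨m, hmxy, hmxp, hmyp⟩ := exists_median hT x y p
  have hm := hF.subtree Y hY x hx y hy hmxy
  rcases ne_or_eq m x with hmx | rfl
  · exact hF.mem_of_isIndecomposable hT hInd hY hx hy hxy hm hmxp hmx
  · exact hF.mem_of_isIndecomposable hT hInd hY hy hx hxy.symm hm hmyp hxy

end Forward

theorem indecomposable_iff_no_transverseFamily_general
    {T : Type*} [MetricSpace T] {N : ℕ} [MulAction (FreeGroup (Fin N)) T]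
    (hT : IsRTree T) (hiso : ∀ g : FreeGroup (Fin N), Isometry fun x : T => g • x) :
    IsIndecomposable (FreeGroup (Fin N)) T ↔
      ¬∃ F : Set (Set T), F.Nonempty ∧ IsTransverseFamily (FreeGroup (Fin N)) F ∧
        ∀ Y ∈ F, Y ≠ Set.univ := by
  refine ⟨fun hInd ⟨F, ⟨Y, hY⟩, hF, hproper⟩ => ?_, fun hno => ?_⟩
  · exact hproper Y hY (hF.eq_univ_of_isIndecomposable hT hInd hY)
  · by_contra hInd
    exact hno (exists_transverseFamily_of_not_isIndecomposable hT hiso hInd)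

/-- A minimal `F_N`-tree is indecomposable if and only if it admits no (nonempty) transverse
family of proper subtrees. -/
theorem indecomposable_iff_no_transverseFamily
    {T : Type*} [MetricSpace T] {N : ℕ} [MulAction (FreeGroup (Fin N)) T]
    (hT : IsRTree T) (hiso : ∀ g : FreeGroup (Fin N), Isometry fun x : T => g • x)
    (hmin : IsMinimalAction (FreeGroup (Fin N)) T) :
    IsIndecomposable (FreeGroup (Fin N)) T ↔
      ¬∃ F : Set (Set T), F.Nonempty ∧ IsTransverseFamily (FreeGroup (Fin N)) F ∧
        ∀ Y ∈ F, Y ≠ Set.univ :=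
  indecomposable_iff_no_transverseFamily_general hT hiso
end
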